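/- arXiv:1508.07941 — 10 statements merged into one kernel-verified Lean document; each statement's English description precedes it below -/
import Mathlib

section
/- The function d ↦ √(ℓ(d)) is convex on [0, π/2), where ℓ(d) = -log(cos²(d)). Equivalently, 2 ℓ(d) ℓ''(d) - (ℓ'(d))² = 4 log(1 + tan²(d))·(1 + tan²(d)) - 4 tan²(d) ≥ 0 for all d ∈ [0, π/2). -/
open Real Set

/-- The cost function `ℓ(d) = -log(cos² d)` of the Logarithmic Entropy-Transport problem. -/
noncomputable def ellLET : ℝ → ℝ := fun d => - Real.log (Real.cos d ^ 2)

lemma ellLET_eq (d : ℝ) : ellLET d = -(2 * Real.log (Real.cos d)) := by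
  simp [ellLET, Real.log_pow]

lemma hasDerivAt_ellLET {d : ℝ} (h : Real.cos d ≠ 0) :
    HasDerivAt ellLET (2 * Real.tan d) d := by
  have h1 : HasDerivAt (fun x => -(2 * Real.log (Real.cos x)))
      (-(2 * ((Real.cos d)⁻¹ * (-Real.sin d)))) d :=
    (((Real.hasDerivAt_log h).comp d (Real.hasDerivAt_cos d)).const_mul 2).neg
  have heq : ellLET = fun x => -(2 * Real.log (Real.cos x)) := funext fun x => ellLET_eq x
  rw [heq]
  convert h1 using 1
  rw [Real.tan_eq_sin_div_cos]
  field_simp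

lemma deriv_ellLET_eventually {d : ℝ} (h : Real.cos d ≠ 0) :
    deriv ellLET =ᶠ[nhds d] fun x => 2 * Real.tan x := by
  have hopen : IsOpen {x : ℝ | Real.cos x ≠ 0} :=
    isOpen_ne.preimage Real.continuous_cos
  filter_upwards [hopen.mem_nhds h] with x hx
  exact (hasDerivAt_ellLET hx).deriv

lemma hasDerivAt_deriv_ellLET {d : ℝ} (h : Real.cos d ≠ 0) :
    HasDerivAt (deriv ellLET) (2 * (1 + Real.tan d ^ 2)) d := by
  have h1 : HasDerivAt (fun x => 2 * Real.tan x) (2 * (1 / Real.cos d ^ 2)) d :=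
    (Real.hasDerivAt_tan h).const_mul 2
  have h2 : (1 : ℝ) / Real.cos d ^ 2 = 1 + Real.tan d ^ 2 := by
    rw [← Real.inv_one_add_tan_sq h, one_div, inv_inv]
  rw [h2] at h1
  exact h1.congr_of_eventuallyEq (deriv_ellLET_eventually h)

lemma ellLET_eq_log {d : ℝ} (h : Real.cos d ≠ 0) :
    ellLET d = Real.log (1 + Real.tan d ^ 2) := by
  rw [show ellLET d = - Real.log (Real.cos d ^ 2) from rfl,
    ← Real.inv_one_add_tan_sq h, Real.log_inv, neg_neg]

lemma key_ineq {r : ℝ} (hr : 0 ≤ r) : r ≤ Real.log (1 + r) * (1 + r) := by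
  have h1 : (0:ℝ) < 1 + r := by linarith
  have h2 := Real.log_le_sub_one_of_pos (inv_pos.2 h1)
  rw [Real.log_inv] at h2
  have h3 := mul_le_mul_of_nonneg_left h2 h1.le
  rw [mul_sub, mul_inv_cancel₀ h1.ne'] at h3
  nlinarith [h3]

/-- `√ℓ` is convex on `[0, π/2)`; equivalently
`2 ℓ ℓ'' - (ℓ')² = 4 log(1 + tan²d)(1 + tan²d) - 4 tan²d ≥ 0` there. -/
theorem sqrt_ellLET_convex :
    ConvexOn ℝ (Set.Ico (0:ℝ) (π / 2)) (fun d => Real.sqrt (ellLET d)) ∧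
    ∀ d ∈ Set.Ico (0:ℝ) (π / 2),
      2 * ellLET d * deriv (deriv ellLET) d - (deriv ellLET d) ^ 2
        = 4 * Real.log (1 + Real.tan d ^ 2) * (1 + Real.tan d ^ 2) - 4 * Real.tan d ^ 2 ∧
      0 ≤ 4 * Real.log (1 + Real.tan d ^ 2) * (1 + Real.tan d ^ 2) - 4 * Real.tan d ^ 2 := by
  have hcos : ∀ d ∈ Set.Ico (0:ℝ) (π / 2), 0 < Real.cos d := by
    intro d hd
    exact Real.cos_pos_of_mem_Ioo ⟨by linarith [hd.1, Real.pi_pos], hd.2⟩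
  -- positivity of ellLET on the open interval
  have hpos : ∀ d ∈ Set.Ioo (0:ℝ) (π / 2), 0 < ellLET d := by
    intro d hd
    have hc : 0 < Real.cos d := hcos d ⟨hd.1.le, hd.2⟩
    have ht : 0 < Real.tan d := Real.tan_pos_of_pos_of_lt_pi_div_two hd.1 hd.2
    rw [ellLET_eq_log hc.ne']
    exact Real.log_pos (by nlinarith)
  -- derivative of g on the open interval
  have hg' : ∀ d ∈ Set.Ioo (0:ℝ) (π / 2),
      HasDerivAt (fun x => Real.sqrt (ellLET x))
        (Real.tan d / Real.sqrt (ellLET d)) d := by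
    intro d hd
    have hc : 0 < Real.cos d := hcos d ⟨hd.1.le, hd.2⟩
    have hℓ : 0 < ellLET d := hpos d hd
    have hs : 0 < Real.sqrt (ellLET d) := Real.sqrt_pos.2 hℓ
    have h1 := (Real.hasDerivAt_sqrt hℓ.ne').comp d (hasDerivAt_ellLET hc.ne')
    refine HasDerivAt.congr_deriv h1 ?_
    field_simp
  constructor
  · -- convexity via second derivative
    have hIoo : interior (Set.Ico (0:ℝ) (π / 2)) = Set.Ioo (0:ℝ) (π / 2) := interior_Ico
    refine convexOn_of_deriv2_nonneg (convex_Ico _ _) ?_ ?_ ?_ ?_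
    · -- continuity on Ico
      intro d hd
      have hc : 0 < Real.cos d := hcos d hd
      exact (Real.continuous_sqrt.continuousAt.comp
        (hasDerivAt_ellLET hc.ne').continuousAt).continuousWithinAt
    · rw [hIoo]
      intro d hd
      exact (hg' d hd).differentiableAt.differentiableWithinAt
    · rw [hIoo]
      intro d hd
      -- deriv g agrees with the explicit formula near d
      have heq : deriv (fun x => Real.sqrt (ellLET x)) =ᶠ[nhds d]
          fun x => Real.tan x / Real.sqrt (ellLET x) := by
        filter_upwards [isOpen_Ioo.mem_nhds hd] with x hx
        exact (hg' x hx).deriv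
      have hc : 0 < Real.cos d := hcos d ⟨hd.1.le, hd.2⟩
      have hℓ : 0 < ellLET d := hpos d hd
      have hs : 0 < Real.sqrt (ellLET d) := Real.sqrt_pos.2 hℓ
      have hG' : DifferentiableAt ℝ (fun x => Real.tan x / Real.sqrt (ellLET x)) d :=
        ((Real.hasDerivAt_tan hc.ne').div (hg' d hd) hs.ne').differentiableAt
      exact (hG'.congr_of_eventuallyEq heq).differentiableWithinAt
    · rw [hIoo]
      intro d hd
      have heq : deriv (fun x => Real.sqrt (ellLET x)) =ᶠ[nhds d]
          fun x => Real.tan x / Real.sqrt (ellLET x) := by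
        filter_upwards [isOpen_Ioo.mem_nhds hd] with x hx
        exact (hg' x hx).deriv
      have hc : 0 < Real.cos d := hcos d ⟨hd.1.le, hd.2⟩
      have hℓ : 0 < ellLET d := hpos d hd
      have hs : 0 < Real.sqrt (ellLET d) := Real.sqrt_pos.2 hℓ
      have hG' := (Real.hasDerivAt_tan hc.ne').div (hg' d hd) hs.ne'
      have hD : deriv^[2] (fun x => Real.sqrt (ellLET x)) d
          = (1 / Real.cos d ^ 2 * Real.sqrt (ellLET d)
              - Real.tan d * (Real.tan d / Real.sqrt (ellLET d)))
            / Real.sqrt (ellLET d) ^ 2 := by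
        show deriv (deriv fun x => Real.sqrt (ellLET x)) d = _
        rw [heq.deriv_eq]
        exact hG'.deriv
      rw [hD]
      apply div_nonneg _ (sq_nonneg _)
      -- numerator nonneg
      have hsq : Real.sqrt (ellLET d) ^ 2 = ellLET d := Real.sq_sqrt hℓ.le
      have hinv : (1:ℝ) / Real.cos d ^ 2 = 1 + Real.tan d ^ 2 := by
        rw [← Real.inv_one_add_tan_sq hc.ne', one_div, inv_inv]
      have hkey : Real.tan d ^ 2
          ≤ Real.log (1 + Real.tan d ^ 2) * (1 + Real.tan d ^ 2) :=
        key_ineq (sq_nonneg _)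
      rw [← ellLET_eq_log hc.ne'] at hkey
      have h2 : Real.tan d * (Real.tan d / Real.sqrt (ellLET d))
          = Real.tan d ^ 2 / Real.sqrt (ellLET d) := by ring
      rw [h2, hinv]
      rw [sub_nonneg, div_le_iff₀ hs]
      nlinarith [hkey, hs, hsq]
  · -- identity and inequality
    intro d hd
    have hc : 0 < Real.cos d := hcos d hd
    have h1 : deriv ellLET d = 2 * Real.tan d := (hasDerivAt_ellLET hc.ne').deriv
    have h2 : deriv (deriv ellLET) d = 2 * (1 + Real.tan d ^ 2) :=
      (hasDerivAt_deriv_ellLET hc.ne').deriv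
    constructor
    · rw [h1, h2, ellLET_eq_log hc.ne']
      ring
    · linarith [key_ineq (sq_nonneg (Real.tan d))]
end

section
/- Let (X, d) be a metric space. The function d_C on (X × [0,∞)) × (X × [0,∞)) defined by d_C((x₁,r₁),(x₂,r₂)) = (r₁² + r₂² - 2 r₁ r₂ cos(min(d(x₁,x₂), π)))^{1/2} is nonnegative, symmetric, and satisfies the triangle inequality. -/
open Real NNReal

/-- Point in the plane at radius `r`, angle `θ`. -/
noncomputable def conePt (r θ : ℝ) : ℂ := ⟨r * Real.cos θ, r * Real.sin θ⟩

lemma dist_conePt (r₁ r₂ α β : ℝ) :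
    dist (conePt r₁ α) (conePt r₂ β)
      = Real.sqrt (r₁ ^ 2 + r₂ ^ 2 - 2 * r₁ * r₂ * Real.cos (α - β)) := by
  rw [Complex.dist_eq_re_im]
  congr 1
  have h1 := Real.sin_sq_add_cos_sq α
  have h2 := Real.sin_sq_add_cos_sq β
  simp only [conePt, Real.cos_sub]
  ring_nf
  nlinarith [h1, h2]

lemma coneE_mono {r₁ r₂ θ₁ θ₂ : ℝ} (hr₁ : 0 ≤ r₁) (hr₂ : 0 ≤ r₂)
    (h0 : 0 ≤ θ₁) (h12 : θ₁ ≤ θ₂) (hπ : θ₂ ≤ π) :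
    Real.sqrt (r₁ ^ 2 + r₂ ^ 2 - 2 * r₁ * r₂ * Real.cos θ₁)
      ≤ Real.sqrt (r₁ ^ 2 + r₂ ^ 2 - 2 * r₁ * r₂ * Real.cos θ₂) := by
  apply Real.sqrt_le_sqrt
  have : Real.cos θ₂ ≤ Real.cos θ₁ := Real.cos_le_cos_of_nonneg_of_le_pi h0 hπ h12
  nlinarith [mul_nonneg (mul_nonneg hr₁ hr₂) (sub_nonneg.2 this)]

lemma min_pi_add (x y : ℝ) (hx : 0 ≤ x) (hy : 0 ≤ y) :
    min (x + y) π ≤ min x π + min y π := by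
  have hπ : 0 ≤ π := Real.pi_nonneg
  rcases le_total x π with h1 | h1
  · rcases le_total y π with h2 | h2
    · rw [min_eq_left h1, min_eq_left h2]; exact min_le_left _ _
    · rw [min_eq_right h2]
      have h3 : min (x + y) π ≤ π := min_le_right _ _
      have h4 : 0 ≤ min x π := le_min hx hπ
      linarith
  · rw [min_eq_right h1]
    have h3 : min (x + y) π ≤ π := min_le_right _ _
    have h4 : 0 ≤ min y π := le_min hy hπ
    linarith

/-- The cone (semi-)distance on `X × [0,∞)` over a metric space `(X,d)`. -/
noncomputable def coneDist {X : Type*} [MetricSpace X] (p q : X × ℝ≥0) : ℝ :=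
  Real.sqrt ((p.2 : ℝ) ^ 2 + (q.2 : ℝ) ^ 2
    - 2 * (p.2 : ℝ) * (q.2 : ℝ) * Real.cos (min (dist p.1 q.1) π))

/-- The cone distance is nonnegative, symmetric and satisfies the triangle inequality. -/
theorem coneDist_pseudometric {X : Type*} [MetricSpace X] :
    (∀ p q : X × ℝ≥0, 0 ≤ coneDist p q) ∧
    (∀ p q : X × ℝ≥0, coneDist p q = coneDist q p) ∧
    (∀ p q r : X × ℝ≥0, coneDist p r ≤ coneDist p q + coneDist q r) := by
  refine ⟨fun p q => Real.sqrt_nonneg _, fun p q => by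
    unfold coneDist; rw [dist_comm]; ring_nf, fun p q r => ?_⟩
  have hπ : (0:ℝ) ≤ π := Real.pi_nonneg
  set a := min (dist p.1 q.1) π with ha_def
  set b := min (dist q.1 r.1) π with hb_def
  set c := min (dist p.1 r.1) π with hc_def
  have ha0 : 0 ≤ a := le_min dist_nonneg hπ
  have hb0 : 0 ≤ b := le_min dist_nonneg hπ
  have hc0 : 0 ≤ c := le_min dist_nonneg hπ
  have haπ : a ≤ π := min_le_right _ _
  have hbπ : b ≤ π := min_le_right _ _
  have hcπ : c ≤ π := min_le_right _ _
  set A := min (a + b) π with hA_def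
  have hAπ : A ≤ π := min_le_right _ _
  have hcA : c ≤ A := by
    have h1 : c ≤ min (dist p.1 q.1 + dist q.1 r.1) π :=
      min_le_min (dist_triangle _ _ _) le_rfl
    have h2 : min (dist p.1 q.1 + dist q.1 r.1) π ≤ a + b :=
      min_pi_add _ _ dist_nonneg dist_nonneg
    exact le_min (le_trans h1 h2) hcπ
  -- split the angle A into a' + b' with a' ≤ a, b' ≤ b
  set a' := min a A with ha'_def
  set b' := A - a' with hb'_def
  have ha'0 : 0 ≤ a' := le_min ha0 (le_min (by linarith) hπ)
  have ha'a : a' ≤ a := min_le_left _ _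
  have hb'0 : 0 ≤ b' := by
    have : a' ≤ A := min_le_right _ _
    rw [hb'_def]; linarith
  have hb'b : b' ≤ b := by
    rcases le_total a A with h | h
    · have : a' = a := min_eq_left h
      have hAab : A ≤ a + b := min_le_left _ _
      rw [hb'_def, this]; linarith
    · have : a' = A := min_eq_right h
      rw [hb'_def, this]; linarith
  have rp0 : (0:ℝ) ≤ (p.2 : ℝ) := p.2.coe_nonneg
  have rq0 : (0:ℝ) ≤ (q.2 : ℝ) := q.2.coe_nonneg
  have rr0 : (0:ℝ) ≤ (r.2 : ℝ) := r.2.coe_nonneg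
  -- main chain
  have step1 : coneDist p r ≤ Real.sqrt ((p.2:ℝ)^2 + (r.2:ℝ)^2
      - 2 * (p.2:ℝ) * (r.2:ℝ) * Real.cos A) :=
    coneE_mono rp0 rr0 hc0 hcA hAπ
  have key : Real.sqrt ((p.2:ℝ)^2 + (r.2:ℝ)^2 - 2 * (p.2:ℝ) * (r.2:ℝ) * Real.cos A)
      ≤ Real.sqrt ((p.2:ℝ)^2 + (q.2:ℝ)^2 - 2 * (p.2:ℝ) * (q.2:ℝ) * Real.cos a')
        + Real.sqrt ((q.2:ℝ)^2 + (r.2:ℝ)^2 - 2 * (q.2:ℝ) * (r.2:ℝ) * Real.cos b') := by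
    have e1 : Real.cos A = Real.cos ((0:ℝ) - A) := by rw [zero_sub, Real.cos_neg]
    have e2 : Real.cos a' = Real.cos ((0:ℝ) - a') := by rw [zero_sub, Real.cos_neg]
    have e3 : Real.cos b' = Real.cos (a' - A) := by
      have : a' - A = -b' := by rw [hb'_def]; ring
      rw [this, Real.cos_neg]
    rw [e1, e2, e3, ← dist_conePt, ← dist_conePt, ← dist_conePt]
    exact dist_triangle _ (conePt (q.2:ℝ) a') _
  have step2 : Real.sqrt ((p.2:ℝ)^2 + (q.2:ℝ)^2 - 2 * (p.2:ℝ) * (q.2:ℝ) * Real.cos a')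
      ≤ coneDist p q := coneE_mono rp0 rq0 ha'0 ha'a haπ
  have step3 : Real.sqrt ((q.2:ℝ)^2 + (r.2:ℝ)^2 - 2 * (q.2:ℝ) * (r.2:ℝ) * Real.cos b')
      ≤ coneDist q r := coneE_mono rq0 rr0 hb'0 hb'b hbπ
  calc coneDist p r ≤ _ := step1
    _ ≤ _ := key
    _ ≤ coneDist p q + coneDist q r := add_le_add step2 step3
end

section
/- Let F : [0,∞) → [0,∞] be convex and lower semicontinuous with F(s₀) < ∞ for some s₀ > 0, and define the reverse entropy R(s) = s·F(1/s) for s > 0 and R(0) = lim_{s→∞} F(s)/s. Then R is convex and lower semicontinuous on [0,∞), and the map F ↦ R is an involution: applying the same construction to R recovers F. -/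
open Filter NNReal ENNReal Topology

lemma nn_tendsto_inv_atTop : Tendsto (fun t : ℝ≥0 => t⁻¹) atTop (𝓝 0) := by
  rw [← NNReal.tendsto_coe]
  simp only [NNReal.coe_inv, NNReal.coe_zero]
  exact tendsto_inv_atTop_zero.comp (NNReal.tendsto_coe_atTop.mpr tendsto_id)

/-- Key slope inequality for convex `F`. -/
lemma slope_le (F : ℝ≥0 → ℝ≥0∞) (hconv : ConvexOn ℝ≥0 Set.univ F) {b a : ℝ≥0}
    (hba : b ≤ a) :
    F a ≤ F b + (↑(a - b) : ℝ≥0∞) * liminf (fun t : ℝ≥0 => F t / (t : ℝ≥0∞)) atTop := by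
  set L := liminf (fun t : ℝ≥0 => F t / (t : ℝ≥0∞)) atTop with hL
  rcases eq_or_lt_of_le hba with rfl | hba'
  · simp
  by_cases hFb : F b = ⊤
  · simp [hFb]
  by_cases hLtop : L = ⊤
  · have h0 : (↑(a - b) : ℝ≥0∞) ≠ 0 := by
      exact_mod_cast (tsub_pos_of_lt hba').ne'
    rw [hLtop, ENNReal.mul_top h0]
    simp
  -- main case
  have key : ∀ n : ℕ, 1 ≤ n →
      F a ≤ F b + (↑(a - b) : ℝ≥0∞) * ((1 + (n : ℝ≥0∞)⁻¹) * (L + (n : ℝ≥0∞)⁻¹)) := by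
    intro n hn
    have hn0 : (n : ℝ≥0) ≠ 0 := Nat.cast_ne_zero.mpr (by omega)
    have hn0' : (n : ℝ≥0∞)⁻¹ ≠ 0 := by
      simp
    have hfreq : ∃ᶠ t : ℝ≥0 in atTop, F t / (t : ℝ≥0∞) < L + (n : ℝ≥0∞)⁻¹ :=
      frequently_lt_of_liminf_lt (h := hL ▸ ENNReal.lt_add_right hLtop hn0')
    obtain ⟨t, ht1, ht2⟩ :=
      (hfreq.and_eventually (eventually_ge_atTop ((n + 1) * (b + 1) + a + 1))).exists
    -- basic facts about t
    have hbt : b < t := by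
      have h1 : b + 1 ≤ ((n:ℝ≥0) + 1) * (b + 1) :=
        le_mul_of_one_le_left zero_le (le_add_self)
      calc b < b + 1 := lt_add_of_pos_right _ one_pos
        _ ≤ ((n:ℝ≥0) + 1) * (b + 1) := h1
        _ ≤ ((n:ℝ≥0) + 1) * (b + 1) + a + 1 := le_add_right (le_add_right le_rfl)
        _ ≤ t := ht2
    have hat : a < t := by
      calc a ≤ ((n:ℝ≥0)+1)*(b+1) + a := le_add_self
        _ < ((n:ℝ≥0)+1)*(b+1) + a + 1 := lt_add_of_pos_right _ one_pos
        _ ≤ t := ht2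
    have htb0 : t - b ≠ 0 := (tsub_pos_of_lt hbt).ne'
    have ht0 : (t : ℝ≥0) ≠ 0 := (lt_of_le_of_lt (zero_le : 0 ≤ b) hbt).ne'
    set σ : ℝ≥0 := (t - a) / (t - b) with hσ
    set θ : ℝ≥0 := (a - b) / (t - b) with hθ
    have hσθ : σ + θ = 1 := by
      rw [hσ, hθ, ← add_div, tsub_add_tsub_cancel hat.le hba, div_self htb0]
    have hcomb : σ • b + θ • t = a := by
      have h1 : θ * (t - b) = a - b := div_mul_cancel₀ _ htb0
      have h2 : θ * t = θ * b + (a - b) := by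
        rw [← h1, mul_tsub]
        exact (add_tsub_cancel_of_le (mul_le_mul_right hbt.le θ)).symm
      show σ * b + θ * t = a
      rw [h2, ← add_assoc, ← add_mul, hσθ, one_mul, add_tsub_cancel_of_le hba]
    have hconvF : F a ≤ σ • F b + θ • F t := by
      have := hconv.2 (Set.mem_univ b) (Set.mem_univ t) (zero_le : 0 ≤ σ) (zero_le : 0 ≤ θ) hσθ
      rwa [hcomb] at this
    -- bound F t
    have hFt : F t ≤ (L + (n : ℝ≥0∞)⁻¹) * (t : ℝ≥0∞) :=
      (ENNReal.div_le_iff_le_mul (Or.inl (by exact_mod_cast ht0))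
        (Or.inl ENNReal.coe_ne_top)).mp ht1.le
    -- bound θ * t
    have hθt : θ * t ≤ (a - b) * (1 + (n:ℝ≥0)⁻¹) := by
      rw [hθ, div_mul_eq_mul_div, mul_div_assoc]
      refine mul_le_mul_right ?_ _
      rw [div_le_iff₀ (pos_iff_ne_zero.mpr htb0)]
      have h1 : (n:ℝ≥0) * b + b ≤ t := by
        calc (n:ℝ≥0)*b + b = ((n:ℝ≥0)+1)*b := by ring
          _ ≤ ((n:ℝ≥0)+1)*(b+1) := mul_le_mul_right (le_add_right le_rfl) _
          _ ≤ t := le_trans (le_add_right (le_add_right le_rfl)) ht2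
      have h2 : (n:ℝ≥0)*b ≤ t - b := le_tsub_of_add_le_right h1
      have h3 : b ≤ (n:ℝ≥0)⁻¹ * (t - b) := by
        calc b = (n:ℝ≥0)⁻¹ * ((n:ℝ≥0)*b) := by
              rw [← mul_assoc, inv_mul_cancel₀ hn0, one_mul]
          _ ≤ _ := mul_le_mul_right h2 _
      calc t = (t - b) + b := (tsub_add_cancel_of_le hbt.le).symm
        _ ≤ (t - b) + (n:ℝ≥0)⁻¹*(t-b) := add_le_add_right h3 _
        _ = (1 + (n:ℝ≥0)⁻¹) * (t - b) := by ring
    have hσ1 : σ ≤ 1 := hσθ ▸ le_add_right le_rfl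
    calc F a ≤ σ • F b + θ • F t := hconvF
      _ ≤ F b + (↑((a-b)*(1+(n:ℝ≥0)⁻¹)) : ℝ≥0∞) * (L + (n : ℝ≥0∞)⁻¹) := by
          refine add_le_add ?_ ?_
          · rw [ENNReal.smul_def, smul_eq_mul]
            calc (↑σ : ℝ≥0∞) * F b ≤ 1 * F b :=
                mul_le_mul_left (by exact_mod_cast hσ1) _
              _ = F b := one_mul _
          · rw [ENNReal.smul_def, smul_eq_mul]
            calc (↑θ : ℝ≥0∞) * F t ≤ (↑θ : ℝ≥0∞) * ((L + (n : ℝ≥0∞)⁻¹) * ↑t) :=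
                mul_le_mul_right hFt _
              _ = (↑(θ * t) : ℝ≥0∞) * (L + (n : ℝ≥0∞)⁻¹) := by
                  rw [ENNReal.coe_mul]; ring
              _ ≤ _ := mul_le_mul_left (by exact_mod_cast hθt) _
      _ = F b + (↑(a - b) : ℝ≥0∞) * ((1 + (n : ℝ≥0∞)⁻¹) * (L + (n : ℝ≥0∞)⁻¹)) := by
          rw [ENNReal.coe_mul, ENNReal.coe_add, ENNReal.coe_one, ENNReal.coe_inv hn0,
            ENNReal.coe_natCast, mul_assoc]
  have htend : Tendsto
      (fun n : ℕ => F b + (↑(a - b) : ℝ≥0∞) * ((1 + (n : ℝ≥0∞)⁻¹) * (L + (n : ℝ≥0∞)⁻¹)))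
      atTop (𝓝 (F b + (↑(a - b) : ℝ≥0∞) * ((1 + 0) * (L + 0)))) := by
    refine Tendsto.const_add _ ?_
    refine ENNReal.Tendsto.const_mul ?_ (Or.inr ENNReal.coe_ne_top)
    refine ENNReal.Tendsto.mul ?_ (Or.inl (by simp)) ?_ (Or.inr (by simp)) <;>
      exact tendsto_const_nhds.add ENNReal.tendsto_inv_nat_nhds_zero
  have := ge_of_tendsto htend ((eventually_ge_atTop 1).mono key)
  simpa using this

/-- For a proper convex entropy, the limsup of `F t / t` is at most the liminf,
so the limit exists. -/
lemma limsup_le_liminf_slope (F : ℝ≥0 → ℝ≥0∞) (hconv : ConvexOn ℝ≥0 Set.univ F)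
    (hproper : ∃ s : ℝ≥0, 0 < s ∧ F s < ⊤) :
    limsup (fun t : ℝ≥0 => F t / (t : ℝ≥0∞)) atTop
      ≤ liminf (fun t : ℝ≥0 => F t / (t : ℝ≥0∞)) atTop := by
  obtain ⟨s₀, hs₀, hs₀fin⟩ := hproper
  set L := liminf (fun t : ℝ≥0 => F t / (t : ℝ≥0∞)) atTop with hL
  refine ENNReal.le_of_forall_pos_le_add fun ε hε hLfin => ?_
  refine limsup_le_of_le (by isBoundedDefault) ?_
  -- eventually F t / t ≤ L + ε
  have hc : ((F s₀ / ε : ℝ≥0∞)).toNNReal + 1 > 0 := by positivity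
  set c : ℝ≥0 := ((F s₀ / ε : ℝ≥0∞)).toNNReal + 1
  filter_upwards [eventually_ge_atTop (max c (s₀ + 1))] with t ht
  have hts₀ : s₀ ≤ t := le_trans ((le_add_right le_rfl).trans (le_max_right c (s₀+1))) ht
  have ht0 : (t:ℝ≥0) ≠ 0 := by
    have : (0:ℝ≥0) < s₀ + 1 := by positivity
    exact (lt_of_lt_of_le (lt_of_lt_of_le this (le_max_right _ _)) ht).ne'
  have hslope := slope_le F hconv hts₀
  have hdivfin : F s₀ / (ε : ℝ≥0∞) ≠ ⊤ :=
    (ENNReal.div_lt_top hs₀fin.ne (by exact_mod_cast hε.ne')).ne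
  have hFs₀t : F s₀ / (t : ℝ≥0∞) ≤ (ε : ℝ≥0∞) := by
    rw [ENNReal.div_le_iff_le_mul (Or.inl (by exact_mod_cast ht0))
      (Or.inl ENNReal.coe_ne_top)]
    have h1 : F s₀ / (ε:ℝ≥0∞) ≤ (c : ℝ≥0∞) := by
      rw [← ENNReal.coe_toNNReal hdivfin]
      exact_mod_cast le_add_right le_rfl
    have h2 : F s₀ ≤ (c:ℝ≥0∞) * ε :=
      (ENNReal.div_le_iff_le_mul (Or.inl (by exact_mod_cast hε.ne'))
        (Or.inl ENNReal.coe_ne_top)).mp h1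
    calc F s₀ ≤ (c:ℝ≥0∞) * ε := h2
      _ = (ε:ℝ≥0∞) * c := mul_comm _ _
      _ ≤ (ε:ℝ≥0∞) * t :=
        mul_le_mul_right (by exact_mod_cast (le_max_left c (s₀+1)).trans ht) _
  calc F t / (t:ℝ≥0∞) ≤ (F s₀ + (↑(t - s₀) : ℝ≥0∞) * L) / (t:ℝ≥0∞) :=
      ENNReal.div_le_div_right hslope _
    _ = F s₀ / (t:ℝ≥0∞) + (↑(t - s₀) : ℝ≥0∞) * L / (t:ℝ≥0∞) := ENNReal.add_div
    _ ≤ (ε:ℝ≥0∞) + L := by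
        refine add_le_add hFs₀t ?_
        have h3 : (↑(t - s₀) : ℝ≥0∞) * L / (t:ℝ≥0∞) ≤ (t:ℝ≥0∞) * L / (t:ℝ≥0∞) := by
          refine ENNReal.div_le_div_right (mul_le_mul_left ?_ _) _
          exact_mod_cast tsub_le_self
        have h4 : (t:ℝ≥0∞) * L / (t:ℝ≥0∞) = L := by
          rw [mul_comm, mul_div_assoc, ENNReal.div_self (by exact_mod_cast ht0)
            ENNReal.coe_ne_top, mul_one]
        exact h3.trans h4.le
    _ = L + ε := add_comm _ _

lemma F_zero_le_liminf_inv (F : ℝ≥0 → ℝ≥0∞) (hlsc : LowerSemicontinuous F) :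
    F 0 ≤ liminf (fun t : ℝ≥0 => F t⁻¹) atTop := by
  refine (le_liminf_iff (by isBoundedDefault) (by isBoundedDefault)).mpr fun y hy => ?_
  exact nn_tendsto_inv_atTop.eventually (hlsc 0 y hy)

lemma limsup_inv_le_F_zero (F : ℝ≥0 → ℝ≥0∞) (hconv : ConvexOn ℝ≥0 Set.univ F)
    (hproper : ∃ s : ℝ≥0, 0 < s ∧ F s < ⊤) :
    limsup (fun t : ℝ≥0 => F t⁻¹) atTop ≤ F 0 := by
  obtain ⟨s₀, hs₀, hs₀fin⟩ := hproper
  refine ENNReal.le_of_forall_pos_le_add fun ε hε hF0fin => ?_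
  refine limsup_le_of_le (by isBoundedDefault) ?_
  set C : ℝ≥0 := (F s₀).toNNReal with hC
  filter_upwards [eventually_ge_atTop (max (s₀⁻¹) (C / (ε * s₀)))] with t ht
  have hts : s₀⁻¹ ≤ t := (le_max_left _ _).trans ht
  have ht0 : (t : ℝ≥0) ≠ 0 := (lt_of_lt_of_le (by positivity) hts).ne'
  have hinv : t⁻¹ ≤ s₀ := by
    rw [← inv_inv s₀]
    exact inv_anti₀ (inv_pos.mpr hs₀) hts
  set lam : ℝ≥0 := t⁻¹ / s₀ with hlam
  have hlam1 : lam ≤ 1 := by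
    rw [hlam, div_le_iff₀ hs₀, one_mul]
    exact hinv
  have hcomb : (1 - lam) • (0:ℝ≥0) + lam • s₀ = t⁻¹ := by
    show (1-lam) * 0 + lam * s₀ = t⁻¹
    rw [mul_zero, zero_add, hlam, div_mul_cancel₀ _ hs₀.ne']
  have hsum : (1 - lam) + lam = 1 := tsub_add_cancel_of_le hlam1
  have hFconv : F t⁻¹ ≤ (1-lam) • F 0 + lam • F s₀ := by
    have := hconv.2 (Set.mem_univ 0) (Set.mem_univ s₀) zero_le zero_le hsum
    rwa [hcomb] at this
  have hlamC : lam * C ≤ ε := by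
    have h1 : C ≤ t * (ε * s₀) :=
      (div_le_iff₀ (by positivity)).mp ((le_max_right _ _).trans ht)
    have h2 : lam * C = C / (t * s₀) := by
      rw [hlam, div_eq_mul_inv, div_eq_mul_inv, mul_inv]; ring
    rw [h2, div_le_iff₀ (by positivity)]
    calc C ≤ t * (ε*s₀) := h1
      _ = ε * (t*s₀) := by ring
  calc F t⁻¹ ≤ (1-lam) • F 0 + lam • F s₀ := hFconv
    _ ≤ F 0 + ↑ε := by
      refine add_le_add ?_ ?_
      · rw [ENNReal.smul_def, smul_eq_mul]
        calc ((1-lam : ℝ≥0) : ℝ≥0∞) * F 0 ≤ 1 * F 0 :=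
            mul_le_mul_left (by exact_mod_cast tsub_le_self) _
          _ = F 0 := one_mul _
      · rw [ENNReal.smul_def, smul_eq_mul, ← ENNReal.coe_toNNReal hs₀fin.ne, ← hC,
          ← ENNReal.coe_mul]
        exact_mod_cast hlamC

/-- The reverse entropy `R(s) = s·F(1/s)` for `s > 0`, with
`R(0) = F∞ = lim_{s→∞} F(s)/s` (realized as a `limsup`, which coincides with the
limit for convex `F`). -/
noncomputable def reverseEntropy (F : ℝ≥0 → ℝ≥0∞) : ℝ≥0 → ℝ≥0∞ := fun s =>
  if s = 0 then Filter.limsup (fun t : ℝ≥0 => F t / (t : ℝ≥0∞)) Filter.atTop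
  else (s : ℝ≥0∞) * F s⁻¹

/-- If `F : [0,∞) → [0,∞]` is convex, lower semicontinuous and proper
(finite at some `s₀ > 0`), then its reverse entropy `R` is convex and lower
semicontinuous, and the construction is an involution: the reverse entropy of `R`
is `F` again. -/
theorem reverseEntropy_involution (F : ℝ≥0 → ℝ≥0∞)
    (hconv : ConvexOn ℝ≥0 Set.univ F)
    (hlsc : LowerSemicontinuous F)
    (hproper : ∃ s : ℝ≥0, 0 < s ∧ F s < ⊤) :
    ConvexOn ℝ≥0 Set.univ (reverseEntropy F) ∧
    LowerSemicontinuous (reverseEntropy F) ∧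
    reverseEntropy (reverseEntropy F) = F := by
  set L := liminf (fun t : ℝ≥0 => F t / (t:ℝ≥0∞)) atTop with hLdef
  have hML : limsup (fun t : ℝ≥0 => F t / (t:ℝ≥0∞)) atTop = L :=
    le_antisymm (limsup_le_liminf_slope F hconv hproper)
      (liminf_le_limsup (by isBoundedDefault) (by isBoundedDefault))
  have hR0 : reverseEntropy F 0 = L := by
    simp only [reverseEntropy, if_pos rfl]
    exact hML
  have hRpos' : ∀ (G : ℝ≥0 → ℝ≥0∞) (s : ℝ≥0), s ≠ 0 →
      reverseEntropy G s = (s:ℝ≥0∞) * G s⁻¹ := by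
    intro G s hs
    simp only [reverseEntropy, if_neg hs]
  have hRpos : ∀ s : ℝ≥0, s ≠ 0 → reverseEntropy F s = (s:ℝ≥0∞) * F s⁻¹ := hRpos' F
  -- key inequality for the "one endpoint is zero" case of convexity
  have hkey0 : ∀ (p q x : ℝ≥0), p + q = 1 → q ≠ 0 → x ≠ 0 →
      reverseEntropy F (q * x) ≤ p • reverseEntropy F 0 + q • reverseEntropy F x := by
    intro p q x hpq hq hx
    rw [hR0, hRpos x hx, hRpos (q*x) (mul_ne_zero hq hx)]
    have hq1 : q ≤ 1 := hpq ▸ le_add_self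
    have hqx0 : q * x ≠ 0 := mul_ne_zero hq hx
    have hba : x⁻¹ ≤ (q*x)⁻¹ :=
      inv_anti₀ (pos_iff_ne_zero.mpr hqx0) (mul_le_of_le_one_left zero_le hq1)
    have hslope := slope_le F hconv hba
    have hd : (q*x) * ((q*x)⁻¹ - x⁻¹) = p := by
      rw [mul_tsub, mul_inv_cancel₀ hqx0, mul_assoc, mul_inv_cancel₀ hx, mul_one]
      exact (eq_tsub_of_add_eq hpq).symm
    calc (↑(q*x) : ℝ≥0∞) * F (q*x)⁻¹
        ≤ ↑(q*x) * (F x⁻¹ + ↑((q*x)⁻¹ - x⁻¹) * L) := mul_le_mul_right hslope _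
      _ = ↑q * (↑x * F x⁻¹) + ↑p * L := by
          rw [mul_add]
          congr 1
          · rw [ENNReal.coe_mul, mul_assoc]
          · rw [← mul_assoc, ← ENNReal.coe_mul, hd]
      _ = p • L + q • ((↑x : ℝ≥0∞) * F x⁻¹) := by
          rw [ENNReal.smul_def, ENNReal.smul_def, smul_eq_mul, smul_eq_mul, add_comm]
  have hconvR : ConvexOn ℝ≥0 Set.univ (reverseEntropy F) := by
    refine ⟨convex_univ, ?_⟩
    intro x _ y _ p q hp hq hpq
    simp only [smul_eq_mul]
    rcases eq_or_ne p 0 with rfl | hp0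
    · have hq1 : q = 1 := by simpa using hpq
      subst hq1
      simp
    rcases eq_or_ne q 0 with rfl | hq0
    · have hp1 : p = 1 := by simpa using hpq
      subst hp1
      simp
    rcases eq_or_ne x 0 with rfl | hx0
    · rcases eq_or_ne y 0 with rfl | hy0
      · simp only [mul_zero, add_zero]
        rw [← add_smul, hpq, one_smul]
      · simpa using hkey0 p q y hpq hq0 hy0
    rcases eq_or_ne y 0 with rfl | hy0
    · have := hkey0 q p x (by rw [add_comm]; exact hpq) hp0 hx0
      simpa [add_comm] using this
    -- both x and y nonzero
    set s : ℝ≥0 := p * x + q * y with hs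
    have hpx0 : p * x ≠ 0 := mul_ne_zero hp0 hx0
    have hs0 : s ≠ 0 := by
      intro h
      have h' : p * x + q * y = 0 := by rw [← hs]; exact h
      exact hpx0 (add_eq_zero.mp h').1
    rw [hRpos x hx0, hRpos y hy0, hRpos s hs0]
    set lam : ℝ≥0 := p * x / s with hlam
    set mu : ℝ≥0 := q * y / s with hmu
    have hlam_mu : lam + mu = 1 := by
      rw [hlam, hmu, ← add_div, ← hs, div_self hs0]
    have hcomb : lam • x⁻¹ + mu • y⁻¹ = s⁻¹ := by
      show lam * x⁻¹ + mu * y⁻¹ = s⁻¹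
      rw [hlam, hmu, div_mul_eq_mul_div, div_mul_eq_mul_div,
        mul_inv_cancel_right₀ hx0, mul_inv_cancel_right₀ hy0,
        ← add_div, hpq, one_div]
    have hFconv : F s⁻¹ ≤ lam • F x⁻¹ + mu • F y⁻¹ := by
      have := hconv.2 (Set.mem_univ x⁻¹) (Set.mem_univ y⁻¹)
        (zero_le : 0 ≤ lam) (zero_le : 0 ≤ mu) hlam_mu
      rwa [hcomb] at this
    have hslam : s * lam = p * x := by
      rw [hlam, mul_comm s, div_mul_cancel₀ _ hs0]
    have hsmu : s * mu = q * y := by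
      rw [hmu, mul_comm s, div_mul_cancel₀ _ hs0]
    calc (↑s : ℝ≥0∞) * F s⁻¹ ≤ ↑s * (lam • F x⁻¹ + mu • F y⁻¹) :=
        mul_le_mul_right hFconv _
      _ = ↑(s * lam) * F x⁻¹ + ↑(s * mu) * F y⁻¹ := by
          rw [mul_add, ENNReal.smul_def, ENNReal.smul_def, smul_eq_mul, smul_eq_mul,
            ← mul_assoc, ← mul_assoc, ← ENNReal.coe_mul, ← ENNReal.coe_mul]
      _ = p • ((↑x:ℝ≥0∞) * F x⁻¹) + q • ((↑y:ℝ≥0∞) * F y⁻¹) := by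
          rw [hslam, hsmu, ENNReal.smul_def, ENNReal.smul_def, smul_eq_mul, smul_eq_mul,
            ENNReal.coe_mul, ENNReal.coe_mul, mul_assoc, mul_assoc]
  have hlscR : LowerSemicontinuous (reverseEntropy F) := by
    intro s
    rcases eq_or_ne s 0 with rfl | hs0
    · intro y hy
      rw [hR0] at hy
      have hev : ∀ᶠ t : ℝ≥0 in atTop, y < F t / (t:ℝ≥0∞) :=
        eventually_lt_of_lt_liminf hy
      obtain ⟨T, hT⟩ := eventually_atTop.mp hev
      have hTpos : (0:ℝ≥0) < (T + 1)⁻¹ := by positivity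
      filter_upwards [eventually_lt_nhds hTpos] with s' hs'
      rcases eq_or_ne s' 0 with rfl | hs'0
      · rw [hR0]; exact hy
      · have hball : T ≤ s'⁻¹ := by
          have h1 : T + 1 ≤ s'⁻¹ := by
            rw [← inv_inv (T+1)]
            exact (inv_anti₀ (pos_iff_ne_zero.mpr hs'0) hs'.le).trans_eq' rfl
          exact (le_add_right le_rfl).trans h1
        have := hT s'⁻¹ hball
        rw [hRpos s' hs'0]
        have heq : F s'⁻¹ / ((s'⁻¹ : ℝ≥0) : ℝ≥0∞) = (↑s' : ℝ≥0∞) * F s'⁻¹ := by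
          rw [div_eq_mul_inv, ENNReal.coe_inv hs'0, inv_inv, mul_comm]
        rw [← heq]
        exact this
    · intro y hy
      rw [hRpos s hs0] at hy
      have hs0' : ((s:ℝ≥0∞)) ≠ 0 := by exact_mod_cast hs0
      have h1 : y / (s:ℝ≥0∞) < F s⁻¹ :=
        (ENNReal.div_lt_iff (Or.inl hs0') (Or.inl ENNReal.coe_ne_top)).mpr
          (by rwa [mul_comm] at hy)
      obtain ⟨c, hc1, hc2⟩ := exists_between h1
      have hc0 : c ≠ 0 := (zero_le.trans_lt hc1).ne'
      have hctop : c ≠ ⊤ := (hc2.trans_le le_top).ne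
      have h2 : y / c < (s:ℝ≥0∞) :=
        (ENNReal.div_lt_iff (Or.inl hc0) (Or.inl hctop)).mpr
          (by rw [mul_comm]
              exact (ENNReal.div_lt_iff (Or.inl hs0') (Or.inl ENNReal.coe_ne_top)).mp hc1)
      obtain ⟨r', hr1, hr2⟩ := exists_between h2
      have hr'top : r' ≠ ⊤ := (hr2.trans_le le_top).ne
      set r : ℝ≥0 := r'.toNNReal with hrdef
      have hrr' : (r : ℝ≥0∞) = r' := ENNReal.coe_toNNReal hr'top
      have hrs : r < s := by
        rw [← ENNReal.coe_lt_coe, hrr']; exact hr2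
      have hylt : y < (r : ℝ≥0∞) * c := by
        rw [hrr']
        exact (ENNReal.div_lt_iff (Or.inl hc0) (Or.inl hctop)).mp hr1
      have hFev : ∀ᶠ u in 𝓝 s⁻¹, c < F u := hlsc s⁻¹ c hc2
      have hcont : ContinuousAt (fun u : ℝ≥0 => u⁻¹) s := continuousAt_inv₀ hs0
      filter_upwards [eventually_gt_nhds hrs, hcont.eventually hFev] with s' h1' h2'
      have hs'0 : s' ≠ 0 := ((zero_le : 0 ≤ r).trans_lt h1').ne'
      rw [hRpos s' hs'0]
      calc y < (r : ℝ≥0∞) * c := hylt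
        _ ≤ (s' : ℝ≥0∞) * F s'⁻¹ :=
          mul_le_mul' (by exact_mod_cast h1'.le) h2'.le
  refine ⟨hconvR, hlscR, ?_⟩
  funext s
  rcases eq_or_ne s 0 with rfl | hs0
  · show (if (0:ℝ≥0) = 0 then limsup (fun t : ℝ≥0 => reverseEntropy F t / (t:ℝ≥0∞)) atTop
      else _) = F 0
    rw [if_pos rfl]
    have hcongr : limsup (fun t : ℝ≥0 => reverseEntropy F t / (t:ℝ≥0∞)) atTop
        = limsup (fun t : ℝ≥0 => F t⁻¹) atTop := by
      refine limsup_congr ?_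
      filter_upwards [eventually_ge_atTop (1:ℝ≥0)] with t ht
      have ht0 : t ≠ 0 := (lt_of_lt_of_le one_pos ht).ne'
      rw [hRpos t ht0, mul_comm, mul_div_assoc,
        ENNReal.div_self (by exact_mod_cast ht0) ENNReal.coe_ne_top, mul_one]
    rw [hcongr]
    exact le_antisymm (limsup_inv_le_F_zero F hconv hproper)
      ((F_zero_le_liminf_inv F hlsc).trans
        (liminf_le_limsup (by isBoundedDefault) (by isBoundedDefault)))
  · rw [hRpos' (reverseEntropy F) s hs0, hRpos s⁻¹ (inv_ne_zero hs0), inv_inv, ← mul_assoc,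
      ← ENNReal.coe_mul, mul_inv_cancel₀ hs0, ENNReal.coe_one, one_mul]
end

section
/- Let F : [0,∞) → [0,∞] be a proper convex lsc entropy function and R(s) = s·F(1/s) (with R(0) = F∞ := lim_{s→∞} F(s)/s) its reverse entropy. Then for all φ, ψ ∈ ℝ: ψ ≤ -F*(φ) if and only if φ ≤ -R*(ψ), where F*, R* denote Legendre conjugates (suprema over s ≥ 0). -/
open Filter NNReal ENNReal

/-- The Legendre conjugate `F*(φ) = sup_{s ≥ 0} (sφ - F(s))` with values in `EReal`. -/
noncomputable def legendreE (F : ℝ≥0 → ℝ≥0∞) (φ : ℝ) : EReal :=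
  ⨆ s : ℝ≥0, (((s : ℝ) * φ : ℝ) : EReal) - (F s : EReal)

lemma lemA (F : ℝ≥0 → ℝ≥0∞) (φ ψ : ℝ) :
    ((ψ : EReal) ≤ - legendreE F φ) ↔
    ∀ s : ℝ≥0, (((s : ℝ) * φ + ψ : ℝ) : EReal) ≤ (F s : EReal) := by
  rw [legendreE]
  rw [show ((ψ : EReal) ≤ - (⨆ s : ℝ≥0, (((s : ℝ) * φ : ℝ) : EReal) - (F s : EReal))) ↔
      ((⨆ s : ℝ≥0, (((s : ℝ) * φ : ℝ) : EReal) - (F s : EReal)) ≤ ((-ψ : ℝ) : EReal)) from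
    ⟨fun h => by simpa using EReal.le_neg_of_le_neg h, fun h => by
      simpa using EReal.le_neg_of_le_neg (by simpa [EReal.coe_neg] using h)⟩]
  rw [iSup_le_iff]
  refine forall_congr' fun s => ?_
  cases hFs : F s with
  | top => simp
  | coe c =>
      rw [EReal.coe_nnreal_eq_coe_real, ← EReal.coe_sub,
        EReal.coe_le_coe_iff, EReal.coe_le_coe_iff]
      constructor <;> intro <;> linarith

lemma lemB (F : ℝ≥0 → ℝ≥0∞) (φ ψ : ℝ) (s : ℝ≥0) (hs : s ≠ 0) :
    ((((s : ℝ) * ψ + φ : ℝ)) : EReal) ≤ (((s : ℝ≥0∞) * F s⁻¹ : ℝ≥0∞) : EReal) ↔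
    ((((s⁻¹ : ℝ≥0) : ℝ) * φ + ψ : ℝ) : EReal) ≤ (F s⁻¹ : EReal) := by
  have hs' : (0:ℝ) < (s:ℝ) := by positivity
  cases hFs : F s⁻¹ with
  | top => simp [ENNReal.mul_top, ENNReal.coe_ne_zero.mpr hs]
  | coe c =>
      rw [← ENNReal.coe_mul, EReal.coe_nnreal_eq_coe_real, EReal.coe_nnreal_eq_coe_real,
        EReal.coe_le_coe_iff, EReal.coe_le_coe_iff]
      push_cast
      have key : (s:ℝ) * ((s:ℝ)⁻¹ * φ + ψ) = (s:ℝ) * ψ + φ := by field_simp; ring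
      constructor <;> intro h
      · exact le_of_mul_le_mul_left (by rw [key]; exact h) hs'
      · calc (s:ℝ) * ψ + φ = (s:ℝ) * ((s:ℝ)⁻¹ * φ + ψ) := key.symm
          _ ≤ (s:ℝ) * c := by exact mul_le_mul_of_nonneg_left h hs'.le

lemma hcoeEntropy {r : ℝ} {x : ℝ≥0∞} (h : ((r:ℝ):EReal) ≤ (x:EReal)) : ENNReal.ofReal r ≤ x := by
  cases x with
  | top => exact le_top
  | coe c =>
      rw [EReal.coe_nnreal_eq_coe_real, EReal.coe_le_coe_iff] at h
      calc ENNReal.ofReal r ≤ ENNReal.ofReal c := ENNReal.ofReal_le_ofReal h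
        _ = c := ENNReal.ofReal_coe_nnreal

lemma lemC (F : ℝ≥0 → ℝ≥0∞) (φ ψ : ℝ)
    (h : ∀ t : ℝ≥0, (((t : ℝ) * φ + ψ : ℝ) : EReal) ≤ (F t : EReal)) :
    (φ : EReal) ≤ ((Filter.limsup (fun t : ℝ≥0 => F t / (t : ℝ≥0∞)) Filter.atTop : ℝ≥0∞) : EReal) := by
  set L := Filter.limsup (fun t : ℝ≥0 => F t / (t : ℝ≥0∞)) Filter.atTop with hL
  refine le_of_forall_lt_imp_le_of_dense fun x hx => ?_
  induction x with
  | bot => exact bot_le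
  | top => exact absurd hx (by simp)
  | coe x =>
    rcases le_or_gt x 0 with hx0 | hx0
    · exact le_trans (by exact_mod_cast hx0) (EReal.coe_ennreal_nonneg L)
    have hxφ : x < φ := by exact_mod_cast hx
    have key : ENNReal.ofReal x ≤ L := by
      have hε : (0:ℝ) < φ - x := by linarith
      have hev : ∀ᶠ t : ℝ≥0 in atTop, ENNReal.ofReal x ≤ F t / (t : ℝ≥0∞) := by
        obtain ⟨T, hT⟩ := exists_gt (max (|ψ| / (φ - x)) 0 : ℝ)
        have hT0 : (0:ℝ) < T := lt_of_le_of_lt (le_max_right _ _) hT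
        filter_upwards [Filter.eventually_ge_atTop (⟨T, hT0.le⟩ : ℝ≥0)] with t ht
        have htT : T ≤ (t:ℝ) := ht
        have ht0 : (0:ℝ) < (t:ℝ) := lt_of_lt_of_le hT0 htT
        have h1 : x ≤ ((t:ℝ) * φ + ψ) / (t:ℝ) := by
          rw [le_div_iff₀ ht0]
          have : |ψ| / (φ - x) < T := lt_of_le_of_lt (le_max_left _ _) hT
          have h2 : |ψ| < (t:ℝ) * (φ - x) := by
            calc |ψ| = (|ψ| / (φ - x)) * (φ - x) := by field_simp
              _ < (t:ℝ) * (φ - x) := by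
                  apply mul_lt_mul_of_pos_right _ hε
                  linarith
          have := neg_abs_le ψ
          nlinarith
        calc ENNReal.ofReal x ≤ ENNReal.ofReal (((t:ℝ) * φ + ψ) / (t:ℝ)) :=
              ENNReal.ofReal_le_ofReal h1
          _ = ENNReal.ofReal ((t:ℝ) * φ + ψ) / ENNReal.ofReal (t:ℝ) :=
              ENNReal.ofReal_div_of_pos ht0
          _ ≤ F t / (t : ℝ≥0∞) := by
              rw [ENNReal.ofReal_coe_nnreal]
              exact ENNReal.div_le_div_right (hcoeEntropy (h t)) _
      have hcb : Filter.IsCoboundedUnder (· ≥ ·) (Filter.atTop : Filter ℝ≥0)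
          (fun t : ℝ≥0 => F t / (t : ℝ≥0∞)) := Filter.isCobounded_ge_of_top
      calc ENNReal.ofReal x ≤ Filter.liminf (fun t : ℝ≥0 => F t / (t : ℝ≥0∞)) Filter.atTop :=
            Filter.le_liminf_of_le hcb hev
        _ ≤ L := Filter.liminf_le_limsup
    calc ((x:ℝ):EReal) = ((ENNReal.ofReal x : ℝ≥0∞) : EReal) := by
          rw [ENNReal.ofReal, EReal.coe_nnreal_eq_coe_real, Real.coe_toNNReal _ hx0.le]
      _ ≤ (L : EReal) := EReal.coe_ennreal_le_coe_ennreal_iff.mpr key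

lemma lemD (F : ℝ≥0 → ℝ≥0∞) (hconv : ConvexOn ℝ≥0 Set.univ F)
    (hproper : ∃ s : ℝ≥0, 0 < s ∧ F s < ⊤) (φ ψ : ℝ)
    (h : ∀ t : ℝ≥0, t ≠ 0 → (((t : ℝ) * φ + ψ : ℝ) : EReal) ≤ (F t : EReal)) :
    ((ψ : ℝ) : EReal) ≤ (F 0 : EReal) := by
  obtain ⟨s₀, hs₀pos, hs₀top⟩ := hproper
  cases hF0 : F 0 with
  | top => exact le_top
  | coe c =>
    lift F s₀ to ℝ≥0 using hs₀top.ne with e he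
    rw [EReal.coe_nnreal_eq_coe_real, EReal.coe_le_coe_iff]
    refine le_of_forall_pos_le_add fun ε hε => ?_
    set K : ℝ := (e:ℝ) - (c:ℝ) - (s₀:ℝ) * φ with hK
    set δ : ℝ := min 1 (ε / (|K| + 1)) with hδ
    have hδpos : 0 < δ := lt_min one_pos (by positivity)
    have hδ1 : δ ≤ 1 := min_le_left _ _
    set b : ℝ≥0 := ⟨δ, hδpos.le⟩ with hb
    have hb1 : b ≤ 1 := by rwa [← NNReal.coe_le_coe]
    have hbpos : 0 < b := by rw [← NNReal.coe_lt_coe]; exact hδpos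
    have hbne : b ≠ 0 := hbpos.ne'
    have hcx := hconv.2 (Set.mem_univ (0:ℝ≥0)) (Set.mem_univ s₀)
      (zero_le : (0:ℝ≥0) ≤ 1 - b) (zero_le : (0:ℝ≥0) ≤ b) (tsub_add_cancel_of_le hb1)
    rw [smul_eq_mul, mul_zero, zero_add, hF0] at hcx
    have hcx' : F (b * s₀) ≤ (((1 - b) * c + b * e : ℝ≥0) : ℝ≥0∞) := by
      refine hcx.trans_eq ?_
      rw [← he]
      simp [ENNReal.smul_def, ENNReal.coe_mul]
    have ht := (h (b * s₀) (mul_ne_zero hbne (ne_of_gt hs₀pos))).trans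
      (EReal.coe_ennreal_le_coe_ennreal_iff.mpr hcx')
    rw [EReal.coe_nnreal_eq_coe_real, EReal.coe_le_coe_iff] at ht
    have hcoe1b : ((1 - b : ℝ≥0) : ℝ) = 1 - δ := by
      rw [NNReal.coe_sub hb1]; rfl
    have hbδ : (b:ℝ) = δ := rfl
    push_cast [hcoe1b, hbδ] at ht
    have hδK : δ * K ≤ ε := by
      have h1 : δ ≤ ε / (|K| + 1) := min_le_right _ _
      have h2 : δ * K ≤ δ * |K| := mul_le_mul_of_nonneg_left (le_abs_self K) hδpos.le
      have h3 : δ * |K| ≤ (ε / (|K| + 1)) * |K| :=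
        mul_le_mul_of_nonneg_right h1 (abs_nonneg K)
      have h4 : (ε / (|K| + 1)) * |K| ≤ ε := by
        rw [div_mul_eq_mul_div, div_le_iff₀ (by positivity)]
        nlinarith [abs_nonneg K]
      linarith
    have : ψ ≤ (c:ℝ) + δ * K := by rw [hK]; nlinarith
    linarith

/-- For a proper convex lsc entropy `F` with reverse entropy `R`:
`ψ ≤ -F*(φ)` if and only if `φ ≤ -R*(ψ)`. -/
theorem reverseEntropy_conjugate_duality (F : ℝ≥0 → ℝ≥0∞)
    (hconv : ConvexOn ℝ≥0 Set.univ F)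
    (hlsc : LowerSemicontinuous F)
    (hproper : ∃ s : ℝ≥0, 0 < s ∧ F s < ⊤) :
    ∀ φ ψ : ℝ,
      ((ψ : EReal) ≤ - legendreE F φ) ↔
      ((φ : EReal) ≤ - legendreE (reverseEntropy F) ψ) := by
  intro φ ψ
  rw [lemA F φ ψ, lemA (reverseEntropy F) ψ φ]
  constructor
  · intro h s
    by_cases hs : s = 0
    · subst hs
      have := lemC F φ ψ h
      simpa [reverseEntropy] using this
    · rw [show reverseEntropy F s = (s : ℝ≥0∞) * F s⁻¹ from if_neg hs]
      exact (lemB F φ ψ s hs).mpr (h s⁻¹)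
  · intro h
    have h' : ∀ t : ℝ≥0, t ≠ 0 → (((t : ℝ) * φ + ψ : ℝ) : EReal) ≤ (F t : EReal) := by
      intro t htne
      have hs : (t⁻¹ : ℝ≥0) ≠ 0 := inv_ne_zero htne
      have := h t⁻¹
      rw [show reverseEntropy F t⁻¹ = ((t⁻¹ : ℝ≥0) : ℝ≥0∞) * F t⁻¹⁻¹ from if_neg hs] at this
      have h2 := (lemB F φ ψ t⁻¹ hs).mp this
      rwa [inv_inv] at h2
    intro t
    by_cases htne : t = 0
    · subst htne
      simpa using lemD F hconv hproper φ ψ h'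
    · exact h' t htne
end

section
/- For F(s) = s log s - s + 1 (with R(s) = s - 1 - log s its reverse entropy) and any c ∈ [0, ∞), the infimum inf_{θ > 0} θ·(R(r₁/θ) + R(r₂/θ) + c) equals r₁ + r₂ - 2·√(r₁ r₂)·e^{-c/2} for all r₁, r₂ ≥ 0 (with the convention R(0) = +∞ and 0·(+∞) interpreted via the limit, so the infimum is r₁ + r₂ when r₁ r₂ = 0). -/
open Real

/-- The reverse logarithmic entropy `R(s) = s - 1 - log s`. -/
noncomputable def Rlog : ℝ → ℝ := fun s => s - 1 - Real.log s

/-- Marginal perspective function of the Logarithmic Entropy-Transport problem: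
for `r₁, r₂ > 0`, `inf_{θ>0} θ(R(r₁/θ) + R(r₂/θ) + c) = r₁ + r₂ - 2√(r₁r₂)e^{-c/2}`;
in the degenerate case `r₁ r₂ = 0` (where `R(0) = +∞` and `0·∞` is interpreted via the
limit) the value of the formula is `r₁ + r₂`. -/
theorem log_marginal_perspective (c r₁ r₂ : ℝ) (hc : 0 ≤ c) (h₁ : 0 ≤ r₁) (h₂ : 0 ≤ r₂) :
    (0 < r₁ → 0 < r₂ →
      IsGLB {y : ℝ | ∃ θ : ℝ, 0 < θ ∧ y = θ * (Rlog (r₁ / θ) + Rlog (r₂ / θ) + c)}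
        (r₁ + r₂ - 2 * Real.sqrt (r₁ * r₂) * Real.exp (-(c / 2)))) ∧
    (r₁ * r₂ = 0 →
      r₁ + r₂ - 2 * Real.sqrt (r₁ * r₂) * Real.exp (-(c / 2)) = r₁ + r₂) := by
  constructor
  · intro hr₁ hr₂
    set A : ℝ := Real.sqrt (r₁ * r₂) * Real.exp (-(c / 2)) with hAdef
    have hA : 0 < A := mul_pos (Real.sqrt_pos.mpr (mul_pos hr₁ hr₂)) (Real.exp_pos _)
    have hlogA : Real.log A = (Real.log r₁ + Real.log r₂ - c) / 2 := by
      rw [hAdef, Real.log_mul (Real.sqrt_pos.mpr (mul_pos hr₁ hr₂)).ne' (Real.exp_pos _).ne',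
        Real.log_exp, Real.log_sqrt (mul_pos hr₁ hr₂).le,
        Real.log_mul hr₁.ne' hr₂.ne']
      ring
    clear_value A
    refine IsLeast.isGLB ⟨⟨A, hA, ?_⟩, ?_⟩
    · have hA2 : Real.sqrt r₁ * Real.sqrt r₂ * Real.exp (-c / 2) = A := by
        rw [hAdef, Real.sqrt_mul h₁, neg_div]
      simp only [Rlog, Real.log_div hr₁.ne' hA.ne', Real.log_div hr₂.ne' hA.ne', hlogA]
      field_simp
      linear_combination 4 * hAdef
    · rintro y ⟨θ, hθ, rfl⟩
      have hlog : Real.log A - Real.log θ ≤ A / θ - 1 := by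
        have h := Real.log_le_sub_one_of_pos (div_pos hA hθ)
        rwa [Real.log_div hA.ne' hθ.ne'] at h
      have hval : θ * (Rlog (r₁ / θ) + Rlog (r₂ / θ) + c)
          = r₁ + r₂ - 2 * θ - 2 * θ * (Real.log A - Real.log θ) := by
        simp only [Rlog, Real.log_div hr₁.ne' hθ.ne', Real.log_div hr₂.ne' hθ.ne', hlogA]
        field_simp
        ring
      rw [hval]
      have h2 : 2 * θ * (Real.log A - Real.log θ) ≤ 2 * θ * (A / θ - 1) := by
        apply mul_le_mul_of_nonneg_left hlog (by positivity)
      have h3 : 2 * θ * (A / θ - 1) = 2 * A - 2 * θ := by field_simp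
      linarith [h3 ▸ h2]
  · intro h0
    rw [h0, Real.sqrt_zero]
    ring
end

section
/- For the total variation entropy F(s) = |s - 1| (which equals its own reverse entropy), and for all r₁, r₂ ≥ 0 and c ≥ 0, the marginal perspective function inf_{θ>0} θ·(|r₁/θ - 1| + |r₂/θ - 1| + c) equals |r₂ - r₁| + min(c, 2)·min(r₁, r₂), which also equals r₁ + r₂ - (2 - c)₊·min(r₁, r₂). -/
open Real

private lemma tv_key (r₁ r₂ c θ : ℝ) (hθ : 0 < θ) :
    θ * (|r₁ / θ - 1| + |r₂ / θ - 1| + c) = |r₁ - θ| + |r₂ - θ| + c * θ := by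
  have hθ' : θ ≠ 0 := ne_of_gt hθ
  have e1 : θ * |r₁ / θ - 1| = |r₁ - θ| := by
    calc θ * |r₁ / θ - 1| = |θ| * |r₁ / θ - 1| := by rw [abs_of_pos hθ]
      _ = |θ * (r₁ / θ - 1)| := (abs_mul _ _).symm
      _ = |r₁ - θ| := by congr 1; field_simp
  have e2 : θ * |r₂ / θ - 1| = |r₂ - θ| := by
    calc θ * |r₂ / θ - 1| = |θ| * |r₂ / θ - 1| := by rw [abs_of_pos hθ]
      _ = |θ * (r₂ / θ - 1)| := (abs_mul _ _).symm
      _ = |r₂ - θ| := by congr 1; field_simp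
  rw [mul_add, mul_add, e1, e2]; ring

private lemma tv_lb (r₁ r₂ c θ : ℝ) (h₁ : 0 ≤ r₁) (h₂ : 0 ≤ r₂) (hc : 0 ≤ c) (hθ : 0 < θ) :
    |r₂ - r₁| + min c 2 * min r₁ r₂ ≤ |r₁ - θ| + |r₂ - θ| + c * θ := by
  have hm2 : min c 2 ≤ 2 := min_le_right _ _
  have hmc : min c 2 ≤ c := min_le_left _ _
  rcases le_total θ (min r₁ r₂) with h | h
  · have ht1 : θ ≤ r₁ := h.trans (min_le_left _ _)
    have ht2 : θ ≤ r₂ := h.trans (min_le_right _ _)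
    rw [abs_of_nonneg (by linarith : (0:ℝ) ≤ r₁ - θ),
      abs_of_nonneg (by linarith : (0:ℝ) ≤ r₂ - θ)]
    have k1 : (0:ℝ) ≤ (2 - min c 2) * (r₁ - θ) :=
      mul_nonneg (by linarith) (by linarith)
    have k2 : (0:ℝ) ≤ (2 - min c 2) * (r₂ - θ) :=
      mul_nonneg (by linarith) (by linarith)
    have k3 : (0:ℝ) ≤ (c - min c 2) * θ := mul_nonneg (by linarith) hθ.le
    rcases le_total r₁ r₂ with hr | hr
    · rw [abs_of_nonneg (by linarith : (0:ℝ) ≤ r₂ - r₁), min_eq_left hr]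
      nlinarith
    · rw [abs_of_nonpos (by linarith : r₂ - r₁ ≤ (0:ℝ)), min_eq_right hr]
      nlinarith
  · have htri : |r₂ - r₁| ≤ |r₁ - θ| + |r₂ - θ| := by
      have := abs_sub (r₂ - θ) (r₁ - θ)
      calc |r₂ - r₁| = |(r₂ - θ) - (r₁ - θ)| := by ring_nf
        _ ≤ |r₂ - θ| + |r₁ - θ| := abs_sub _ _
        _ = |r₁ - θ| + |r₂ - θ| := by ring
    have hmin0 : 0 ≤ min r₁ r₂ := le_min h₁ h₂
    have : min c 2 * min r₁ r₂ ≤ c * θ := by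
      calc min c 2 * min r₁ r₂ ≤ c * min r₁ r₂ := by nlinarith
        _ ≤ c * θ := by nlinarith
    linarith

/-- Marginal perspective function of the total variation entropy `V(s) = |s - 1|`:
`inf_{θ>0} θ(|r₁/θ - 1| + |r₂/θ - 1| + c) = |r₂ - r₁| + (c ∧ 2)·(r₁ ∧ r₂)
= r₁ + r₂ - (2 - c)₊·(r₁ ∧ r₂)`. -/
theorem tv_marginal_perspective (r₁ r₂ c : ℝ) (h₁ : 0 ≤ r₁) (h₂ : 0 ≤ r₂) (hc : 0 ≤ c) :
    IsGLB {y : ℝ | ∃ θ : ℝ, 0 < θ ∧ y = θ * (|r₁ / θ - 1| + |r₂ / θ - 1| + c)}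
      (|r₂ - r₁| + min c 2 * min r₁ r₂) ∧
    |r₂ - r₁| + min c 2 * min r₁ r₂ = r₁ + r₂ - max (2 - c) 0 * min r₁ r₂ := by
  set L := |r₂ - r₁| + min c 2 * min r₁ r₂ with hL
  constructor
  · constructor
    · rintro y ⟨θ, hθ, rfl⟩
      rw [tv_key r₁ r₂ c θ hθ]
      exact tv_lb r₁ r₂ c θ h₁ h₂ hc hθ
    · intro b hb
      refine le_of_forall_pos_le_add fun ε hε => ?_
      by_cases hcase : c ≤ 2 ∧ 0 < min r₁ r₂
      · obtain ⟨hc2, hm⟩ := hcase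
        have hmem : |r₁ - min r₁ r₂| + |r₂ - min r₁ r₂| + c * min r₁ r₂ ∈
            {y : ℝ | ∃ θ : ℝ, 0 < θ ∧ y = θ * (|r₁ / θ - 1| + |r₂ / θ - 1| + c)} :=
          ⟨min r₁ r₂, hm, (tv_key r₁ r₂ c _ hm).symm⟩
        have hval : |r₁ - min r₁ r₂| + |r₂ - min r₁ r₂| + c * min r₁ r₂ = L := by
          rw [hL, min_eq_left hc2]
          rcases le_total r₁ r₂ with hr | hr
          · rw [min_eq_left hr, sub_self, abs_zero,
              abs_of_nonneg (by linarith : (0:ℝ) ≤ r₂ - r₁)]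
            ring
          · rw [min_eq_right hr, sub_self, abs_zero,
              abs_of_nonpos (by linarith : r₂ - r₁ ≤ (0:ℝ)),
              abs_of_nonneg (by linarith : (0:ℝ) ≤ r₁ - r₂)]
            ring
        have := hb hmem
        rw [hval] at this
        linarith
      · -- in this case L = r₁ + r₂
        have hLval : L = r₁ + r₂ := by
          push_neg at hcase
          rcases le_or_gt c 2 with hc2 | hc2
          · have hm : min r₁ r₂ = 0 := le_antisymm (by linarith [hcase hc2]) (le_min h₁ h₂)
            rw [hL, hm, mul_zero, add_zero]
            rcases le_total r₁ r₂ with hr | hr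
            · have : r₁ = 0 := by rw [min_eq_left hr] at hm; exact hm
              rw [this]; rw [abs_of_nonneg (by linarith)]; ring
            · have : r₂ = 0 := by rw [min_eq_right hr] at hm; exact hm
              rw [this]; rw [abs_of_nonpos (by linarith)]; ring
          · rw [hL, min_eq_right (le_of_lt hc2)]
            rcases le_total r₁ r₂ with hr | hr
            · rw [min_eq_left hr, abs_of_nonneg (by linarith)]; ring
            · rw [min_eq_right hr, abs_of_nonpos (by linarith)]; ring
        set θ := ε / (2 + c) with hθdef
        have hθpos : 0 < θ := div_pos hε (by linarith)
        have hmem : θ * (|r₁ / θ - 1| + |r₂ / θ - 1| + c) ∈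
            {y : ℝ | ∃ θ' : ℝ, 0 < θ' ∧ y = θ' * (|r₁ / θ' - 1| + |r₂ / θ' - 1| + c)} :=
          ⟨θ, hθpos, rfl⟩
        have hval : θ * (|r₁ / θ - 1| + |r₂ / θ - 1| + c) ≤ r₁ + r₂ + (2 + c) * θ := by
          rw [tv_key r₁ r₂ c θ hθpos]
          have a1 : |r₁ - θ| ≤ r₁ + θ := by
            rw [abs_le]; constructor <;> nlinarith
          have a2 : |r₂ - θ| ≤ r₂ + θ := by
            rw [abs_le]; constructor <;> nlinarith
          linarith
        have hθε : (2 + c) * θ = ε := by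
          rw [hθdef]; field_simp
        have := hb hmem
        rw [hLval]
        linarith
  · rw [hL]
    rcases le_total c 2 with hc2 | hc2
    · rw [min_eq_left hc2, max_eq_left (by linarith)]
      rcases le_total r₁ r₂ with hr | hr
      · rw [min_eq_left hr, abs_of_nonneg (by linarith)]; ring
      · rw [min_eq_right hr, abs_of_nonpos (by linarith)]; ring
    · rw [min_eq_right hc2, max_eq_right (by linarith)]
      rcases le_total r₁ r₂ with hr | hr
      · rw [min_eq_left hr, abs_of_nonneg (by linarith)]; ring
      · rw [min_eq_right hr, abs_of_nonpos (by linarith)]; ring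
end

section
/- For F(s) = s log s - s + 1, the Hellinger perspective formula holds: inf_{θ > 0} (θ₁·F(θ/θ₁) + θ₂·F(θ/θ₂)) = (√θ₁ - √θ₂)² for all θ₁, θ₂ > 0, the infimum being attained at θ = √(θ₁ θ₂). -/
open Real

/-- The logarithmic entropy `F(s) = s log s - s + 1`. -/
noncomputable def Flog : ℝ → ℝ := fun s => s * Real.log s - s + 1

lemma Flog_expand (a θ : ℝ) (ha : 0 < a) (hθ : 0 < θ) :
    a * Flog (θ / a) = θ * (Real.log θ - Real.log a) - θ + a := by
  simp only [Flog]
  rw [Real.log_div (ne_of_gt hθ) (ne_of_gt ha)]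
  field_simp

lemma value_at_sqrt (θ₁ θ₂ : ℝ) (h₁ : 0 < θ₁) (h₂ : 0 < θ₂) :
    θ₁ * Flog (Real.sqrt (θ₁ * θ₂) / θ₁) + θ₂ * Flog (Real.sqrt (θ₁ * θ₂) / θ₂)
      = (Real.sqrt θ₁ - Real.sqrt θ₂) ^ 2 := by
  have hm : 0 < Real.sqrt (θ₁ * θ₂) := Real.sqrt_pos.mpr (mul_pos h₁ h₂)
  rw [Flog_expand θ₁ _ h₁ hm, Flog_expand θ₂ _ h₂ hm]
  have hlog : Real.log (Real.sqrt (θ₁ * θ₂)) = (Real.log θ₁ + Real.log θ₂) / 2 := by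
    rw [Real.log_sqrt (le_of_lt (mul_pos h₁ h₂)), Real.log_mul h₁.ne' h₂.ne']
  have hs : Real.sqrt (θ₁ * θ₂) = Real.sqrt θ₁ * Real.sqrt θ₂ :=
    Real.sqrt_mul h₁.le _
  have h1 : Real.sqrt θ₁ ^ 2 = θ₁ := Real.sq_sqrt h₁.le
  have h2 : Real.sqrt θ₂ ^ 2 = θ₂ := Real.sq_sqrt h₂.le
  rw [hlog, hs]
  nlinarith [Real.sqrt_nonneg θ₁, Real.sqrt_nonneg θ₂]

/-- Hellinger perspective formula:
`inf_{θ>0} (θ₁ F(θ/θ₁) + θ₂ F(θ/θ₂)) = (√θ₁ - √θ₂)²`, attained at `θ = √(θ₁θ₂)`. -/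
theorem hellinger_perspective (θ₁ θ₂ : ℝ) (h₁ : 0 < θ₁) (h₂ : 0 < θ₂) :
    IsLeast {y : ℝ | ∃ θ : ℝ, 0 < θ ∧ y = θ₁ * Flog (θ / θ₁) + θ₂ * Flog (θ / θ₂)}
      ((Real.sqrt θ₁ - Real.sqrt θ₂) ^ 2) ∧
    θ₁ * Flog (Real.sqrt (θ₁ * θ₂) / θ₁) + θ₂ * Flog (Real.sqrt (θ₁ * θ₂) / θ₂)
      = (Real.sqrt θ₁ - Real.sqrt θ₂) ^ 2 := by
  have hval := value_at_sqrt θ₁ θ₂ h₁ h₂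
  refine ⟨⟨⟨Real.sqrt (θ₁ * θ₂), Real.sqrt_pos.mpr (mul_pos h₁ h₂), hval.symm⟩, ?_⟩, hval⟩
  rintro y ⟨θ, hθ, rfl⟩
  rw [Flog_expand θ₁ _ h₁ hθ, Flog_expand θ₂ _ h₂ hθ]
  set m := Real.sqrt (θ₁ * θ₂) with hm_def
  have hm : 0 < m := Real.sqrt_pos.mpr (mul_pos h₁ h₂)
  have hlog : Real.log m = (Real.log θ₁ + Real.log θ₂) / 2 := by
    rw [hm_def, Real.log_sqrt (le_of_lt (mul_pos h₁ h₂)), Real.log_mul h₁.ne' h₂.ne']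
  -- key inequality: θ * (log θ - log m) ≥ θ - m
  have hkey : θ - m ≤ θ * (Real.log θ - Real.log m) := by
    have h := Real.log_le_sub_one_of_pos (div_pos hm hθ)
    rw [Real.log_div hm.ne' hθ.ne'] at h
    have : Real.log m - Real.log θ ≤ m / θ - 1 := h
    have hmul := mul_le_mul_of_nonneg_left this hθ.le
    have : θ * (m / θ - 1) = m - θ := by field_simp
    nlinarith
  have hs : m = Real.sqrt θ₁ * Real.sqrt θ₂ := Real.sqrt_mul h₁.le _
  have h1 : Real.sqrt θ₁ ^ 2 = θ₁ := Real.sq_sqrt h₁.le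
  have h2 : Real.sqrt θ₂ ^ 2 = θ₂ := Real.sq_sqrt h₂.le
  nlinarith [hkey, hlog]
end

section
/- For F(s) = s - 1 - log s and θ₁, θ₂ > 0, one has inf_{θ > 0} (θ₁·F(θ/θ₁) + θ₂·F(θ/θ₂) + cθ) = θ₁ log θ₁ + θ₂ log θ₂ - (θ₁ + θ₂)·log((θ₁ + θ₂)/(2 + c)) for every c ≥ 0, the infimum being attained at θ = (θ₁ + θ₂)/(2 + c). -/
open Real

/-- The reversed logarithmic entropy `F(s) = s - 1 - log s`. -/
noncomputable def U0 : ℝ → ℝ := fun s => s - 1 - Real.log s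

lemma U0_expand (θ₁ θ₂ c θ : ℝ) (h₁ : 0 < θ₁) (h₂ : 0 < θ₂) (hθ : 0 < θ) :
    θ₁ * U0 (θ / θ₁) + θ₂ * U0 (θ / θ₂) + c * θ
      = (2 + c) * θ - (θ₁ + θ₂) - (θ₁ + θ₂) * Real.log θ
        + θ₁ * Real.log θ₁ + θ₂ * Real.log θ₂ := by
  simp only [U0]
  rw [Real.log_div hθ.ne' h₁.ne', Real.log_div hθ.ne' h₂.ne']
  field_simp
  ring

/-- Jensen–Shannon type perspective formula: for `θ₁, θ₂ > 0` and `c ≥ 0`,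
`inf_{θ>0} (θ₁ F(θ/θ₁) + θ₂ F(θ/θ₂) + cθ)
 = θ₁ log θ₁ + θ₂ log θ₂ - (θ₁+θ₂) log((θ₁+θ₂)/(2+c))`,
attained at `θ = (θ₁+θ₂)/(2+c)`. -/
theorem jensen_shannon_perspective (θ₁ θ₂ c : ℝ) (h₁ : 0 < θ₁) (h₂ : 0 < θ₂) (hc : 0 ≤ c) :
    IsLeast {y : ℝ | ∃ θ : ℝ, 0 < θ ∧ y = θ₁ * U0 (θ / θ₁) + θ₂ * U0 (θ / θ₂) + c * θ}
      (θ₁ * Real.log θ₁ + θ₂ * Real.log θ₂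
        - (θ₁ + θ₂) * Real.log ((θ₁ + θ₂) / (2 + c))) ∧
    θ₁ * U0 ((θ₁ + θ₂) / (2 + c) / θ₁) + θ₂ * U0 ((θ₁ + θ₂) / (2 + c) / θ₂)
        + c * ((θ₁ + θ₂) / (2 + c))
      = θ₁ * Real.log θ₁ + θ₂ * Real.log θ₂
        - (θ₁ + θ₂) * Real.log ((θ₁ + θ₂) / (2 + c)) := by
  have hS : 0 < θ₁ + θ₂ := by linarith
  have h2c : 0 < 2 + c := by linarith
  have hst : 0 < (θ₁ + θ₂) / (2 + c) := div_pos hS h2c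
  have key : θ₁ * U0 ((θ₁ + θ₂) / (2 + c) / θ₁) + θ₂ * U0 ((θ₁ + θ₂) / (2 + c) / θ₂)
        + c * ((θ₁ + θ₂) / (2 + c))
      = θ₁ * Real.log θ₁ + θ₂ * Real.log θ₂
        - (θ₁ + θ₂) * Real.log ((θ₁ + θ₂) / (2 + c)) := by
    rw [U0_expand θ₁ θ₂ c _ h₁ h₂ hst]
    have : (2 + c) * ((θ₁ + θ₂) / (2 + c)) = θ₁ + θ₂ := by
      field_simp
    rw [this]; ring
  refine ⟨⟨⟨(θ₁ + θ₂) / (2 + c), hst, key.symm⟩, ?_⟩, key⟩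
  rintro y ⟨θ, hθ, rfl⟩
  rw [U0_expand θ₁ θ₂ c θ h₁ h₂ hθ]
  have hlog : Real.log θ - Real.log ((θ₁ + θ₂) / (2 + c))
      ≤ θ / ((θ₁ + θ₂) / (2 + c)) - 1 := by
    rw [← Real.log_div hθ.ne' hst.ne']
    exact Real.log_le_sub_one_of_pos (div_pos hθ hst)
  have hmul := mul_le_mul_of_nonneg_left hlog hS.le
  have hdiv : θ / ((θ₁ + θ₂) / (2 + c)) = (2 + c) * θ / (θ₁ + θ₂) := by
    field_simp
  rw [hdiv] at hmul
  have : (θ₁ + θ₂) * ((2 + c) * θ / (θ₁ + θ₂) - 1) = (2 + c) * θ - (θ₁ + θ₂) := by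
    field_simp
  rw [this] at hmul
  nlinarith [hmul]
end

section
/- Let (X, d) be a metric space, t > 0, ξ : X → ℝ with 1 + 2tξ(x') > 0 for all x'. For fixed x ∈ X, r ≥ 0, and x' ∈ X, the infimum over r' ≥ 0 of ξ(x')·r'² + (1/(2t))·(r² + r'² - 2 r r' cos(min(d(x,x'), π))) equals (r²/(2t(1 + 2tξ(x'))))·(2tξ(x') + sin²(min(d(x,x'), π/2))), attained at r' = r·cos(d(x,x'))/(1 + 2tξ(x')) when d(x,x') ≤ π/2 and at r' = 0 otherwise. -/
open Real

/-- Reduction of the Hopf–Lax formula from the cone to the base space: the minimum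
over `r' ≥ 0` of `ξ(x')·r'² + (1/(2t))·d_C²((x,r),(x',r'))` equals
`(r²/(2t(1+2tξ(x'))))·(2tξ(x') + sin²(d(x,x') ∧ π/2))`, attained at
`r' = r cos(d(x,x'))/(1+2tξ(x'))` when `d(x,x') ≤ π/2` and at `r' = 0` otherwise. -/
theorem hopfLax_cone_reduction {X : Type*} [MetricSpace X] (t : ℝ) (ht : 0 < t)
    (ξ : X → ℝ) (hξ : ∀ z : X, 0 < 1 + 2 * t * ξ z) (x x' : X) (r : ℝ) (hr : 0 ≤ r) :
    IsLeast {y : ℝ | ∃ r' : ℝ, 0 ≤ r' ∧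
        y = ξ x' * r' ^ 2 + (1 / (2 * t)) *
          (r ^ 2 + r' ^ 2 - 2 * r * r' * Real.cos (min (dist x x') π))}
      (r ^ 2 / (2 * t * (1 + 2 * t * ξ x')) *
        (2 * t * ξ x' + Real.sin (min (dist x x') (π / 2)) ^ 2)) ∧
    ξ x' * (if dist x x' ≤ π / 2 then r * Real.cos (dist x x') / (1 + 2 * t * ξ x') else 0) ^ 2
      + (1 / (2 * t)) *
        (r ^ 2 +
          (if dist x x' ≤ π / 2 then r * Real.cos (dist x x') / (1 + 2 * t * ξ x') else 0) ^ 2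
          - 2 * r *
            (if dist x x' ≤ π / 2 then r * Real.cos (dist x x') / (1 + 2 * t * ξ x') else 0) *
            Real.cos (min (dist x x') π))
      = r ^ 2 / (2 * t * (1 + 2 * t * ξ x')) *
          (2 * t * ξ x' + Real.sin (min (dist x x') (π / 2)) ^ 2) := by
  have ha := hξ x'
  have ha' : (1 + 2 * t * ξ x') ≠ 0 := ne_of_gt ha
  have ht' : (2 * t) ≠ 0 := by positivity
  set d := dist x x' with hd
  have hd0 : 0 ≤ d := dist_nonneg
  by_cases h : d ≤ π / 2
  · have hminπ : min d π = d := min_eq_left (h.trans (by linarith [pi_pos]))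
    have hmin2 : min d (π / 2) = d := min_eq_left h
    have hc : 0 ≤ Real.cos d := Real.cos_nonneg_of_mem_Icc ⟨by linarith, h⟩
    have hsc : Real.sin d ^ 2 = 1 - Real.cos d ^ 2 := by
      have := Real.sin_sq_add_cos_sq d; linarith
    have heq : ξ x' * (r * Real.cos d / (1 + 2 * t * ξ x')) ^ 2
        + (1 / (2 * t)) * (r ^ 2 + (r * Real.cos d / (1 + 2 * t * ξ x')) ^ 2
          - 2 * r * (r * Real.cos d / (1 + 2 * t * ξ x')) * Real.cos d)
        = r ^ 2 / (2 * t * (1 + 2 * t * ξ x')) * (2 * t * ξ x' + Real.sin d ^ 2) := by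
      rw [hsc]; field_simp [show (1 + ξ x' * 2 * t) ≠ 0 by contrapose! ha'; linarith]; ring
    simp only [hminπ, hmin2, if_pos h]
    refine ⟨⟨⟨r * Real.cos d / (1 + 2 * t * ξ x'), by positivity, heq.symm⟩, ?_⟩, heq⟩
    rintro y ⟨r', hr', rfl⟩
    rw [hsc]
    rw [div_mul_eq_mul_div, div_le_iff₀ (by positivity)]
    have expand : (ξ x' * r' ^ 2 + 1 / (2 * t) * (r ^ 2 + r' ^ 2 - 2 * r * r' * Real.cos d))
        * (2 * t * (1 + 2 * t * ξ x'))
        = (2 * t * ξ x' * r' ^ 2 + r ^ 2 + r' ^ 2 - 2 * r * r' * Real.cos d)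
          * (1 + 2 * t * ξ x') := by field_simp; ring
    rw [expand]
    nlinarith [sq_nonneg ((1 + 2 * t * ξ x') * r' - r * Real.cos d), ht, ha,
      mul_pos ht ha]
  · push_neg at h
    have hmin2 : min d (π / 2) = π / 2 := min_eq_right h.le
    have hc : Real.cos (min d π) ≤ 0 := by
      apply Real.cos_nonpos_of_pi_div_two_le_of_le
      · exact le_min h.le (by linarith [pi_pos])
      · linarith [min_le_right d π, pi_pos]
    have heq : ξ x' * (0:ℝ) ^ 2 + (1 / (2 * t)) * (r ^ 2 + (0:ℝ) ^ 2
          - 2 * r * 0 * Real.cos (min d π))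
        = r ^ 2 / (2 * t * (1 + 2 * t * ξ x')) * (2 * t * ξ x' + Real.sin (π / 2) ^ 2) := by
      rw [Real.sin_pi_div_two]; field_simp [show (1 + ξ x' * 2 * t) ≠ 0 by contrapose! ha'; linarith]; ring
    simp only [hmin2, if_neg (not_le.mpr h)]
    refine ⟨⟨⟨0, le_refl _, heq.symm⟩, ?_⟩, heq⟩
    rintro y ⟨r', hr', rfl⟩
    rw [Real.sin_pi_div_two]
    have hrhs : r ^ 2 / (2 * t * (1 + 2 * t * ξ x')) * (2 * t * ξ x' + 1 ^ 2)
        = r ^ 2 / (2 * t) := by field_simp; ring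
    rw [hrhs, div_le_iff₀ (by positivity)]
    have expand : (ξ x' * r' ^ 2 + 1 / (2 * t) *
          (r ^ 2 + r' ^ 2 - 2 * r * r' * Real.cos (min d π))) * (2 * t)
        = 2 * t * ξ x' * r' ^ 2 + r ^ 2 + r' ^ 2 - 2 * r * r' * Real.cos (min d π) := by
      field_simp; ring
    rw [expand]
    nlinarith [mul_nonneg (mul_nonneg hr hr') (neg_nonneg.mpr hc), ht, ha,
      mul_pos ht ha, sq_nonneg r']
end

section
/- Let ℓ : [0,∞) → [0,∞] be strictly convex and increasing on its domain. Suppose points (x₁, x₂), (x₁', x₂') ∈ ℝ × ℝ satisfy the two-point cyclical monotonicity inequality ℓ(|x₁ - x₂|) + ℓ(|x₁' - x₂'|) ≤ ℓ(|x₁ - x₂'|) + ℓ(|x₁' - x₂|), with the left-hand side finite. If x₁ < x₁' then x₂ ≤ x₂'. -/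
open Real Set

lemma ereal_key (ℓ : ℝ → EReal)
    (hnonneg : ∀ d : ℝ, 0 ≤ d → (0 : EReal) ≤ ℓ d)
    (hmono : MonotoneOn ℓ (Set.Ici (0:ℝ)))
    (hsmono : StrictMonoOn ℓ {d : ℝ | 0 ≤ d ∧ ℓ d ≠ ⊤})
    (hsconv : ∀ a ∈ {d : ℝ | 0 ≤ d ∧ ℓ d ≠ ⊤}, ∀ b ∈ {d : ℝ | 0 ≤ d ∧ ℓ d ≠ ⊤},
      a ≠ b → ∀ t : ℝ, 0 < t → t < 1 →
      ℓ (t * a + (1 - t) * b) < (t : EReal) * ℓ a + ((1 - t : ℝ) : EReal) * ℓ b)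
    (s t θ : ℝ) (hst : s ≠ t) (hs : ℓ |s| ≠ ⊤) (ht : ℓ |t| ≠ ⊤)
    (hθ0 : 0 < θ) (hθ1 : θ < 1) :
    ℓ |θ * s + (1 - θ) * t| < (θ : EReal) * ℓ |s| + ((1 - θ : ℝ) : EReal) * ℓ |t| := by
  have habs : |θ * s + (1 - θ) * t| ≤ θ * |s| + (1 - θ) * |t| := by
    calc |θ * s + (1 - θ) * t| ≤ |θ * s| + |(1 - θ) * t| := abs_add_le _ _
      _ = θ * |s| + (1 - θ) * |t| := by
          rw [abs_mul, abs_mul, abs_of_pos hθ0,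
            abs_of_pos (show (0:ℝ) < 1 - θ by linarith)]
  by_cases hcase : |s| = |t|
  · -- then s = -t, t ≠ 0
    have hseq : s = -t := by
      rcases abs_eq_abs.mp hcase with h | h
      · exact absurd h hst
      · exact h
    have ht0 : t ≠ 0 := by
      intro h0; apply hst; rw [hseq, h0, neg_zero]
    have hcombo : |θ * s + (1 - θ) * t| < |t| := by
      have : θ * s + (1 - θ) * t = (1 - 2 * θ) * t := by rw [hseq]; ring
      rw [this, abs_mul]
      have h1 : |1 - 2 * θ| < 1 := by
        rw [abs_lt]; constructor <;> linarith
      have h2 : 0 < |t| := abs_pos.mpr ht0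
      nlinarith
    have hmem2 : |t| ∈ {d : ℝ | 0 ≤ d ∧ ℓ d ≠ ⊤} := ⟨abs_nonneg t, ht⟩
    have hle : ℓ |θ * s + (1 - θ) * t| ≤ ℓ |t| :=
      hmono (Set.mem_Ici.mpr (abs_nonneg _)) (Set.mem_Ici.mpr (abs_nonneg _)) hcombo.le
    have hmem1 : |θ * s + (1 - θ) * t| ∈ {d : ℝ | 0 ≤ d ∧ ℓ d ≠ ⊤} :=
      ⟨abs_nonneg _, fun h => ht (top_le_iff.mp (h ▸ hle))⟩
    have hlt : ℓ |θ * s + (1 - θ) * t| < ℓ |t| := hsmono hmem1 hmem2 hcombo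
    -- RHS equals ℓ |t|
    have hbot : ℓ |t| ≠ ⊥ := by
      intro h
      have := hnonneg |t| (abs_nonneg t)
      rw [h] at this
      simp at this
    obtain ⟨B, hB⟩ : ∃ B : ℝ, ℓ |t| = (B : EReal) := ⟨_, (EReal.coe_toReal ht hbot).symm⟩
    rw [hcase, hB]
    calc ℓ |θ * s + (1 - θ) * t| < (B : EReal) := hB ▸ hlt
      _ = (θ : EReal) * (B : EReal) + ((1 - θ : ℝ) : EReal) * (B : EReal) := by
          rw [← EReal.coe_mul, ← EReal.coe_mul, ← EReal.coe_add]
          norm_cast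
          ring
  · have hle : ℓ |θ * s + (1 - θ) * t| ≤ ℓ (θ * |s| + (1 - θ) * |t|) := by
      apply hmono (Set.mem_Ici.mpr (abs_nonneg _)) _ habs
      have h1 : (0:ℝ) ≤ θ * |s| := mul_nonneg hθ0.le (abs_nonneg s)
      have h2 : (0:ℝ) ≤ (1 - θ) * |t| := mul_nonneg (by linarith) (abs_nonneg t)
      exact Set.mem_Ici.mpr (by linarith)
    calc ℓ |θ * s + (1 - θ) * t| ≤ ℓ (θ * |s| + (1 - θ) * |t|) := hle
      _ < (θ : EReal) * ℓ |s| + ((1 - θ : ℝ) : EReal) * ℓ |t| :=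
          hsconv |s| ⟨abs_nonneg s, hs⟩ |t| ⟨abs_nonneg t, ht⟩ hcase θ hθ0 hθ1

/-- Monotonicity of cyclically monotone pairs in `ℝ` for the cost `ℓ(|x₁ - x₂|)`:
if `ℓ : [0,∞) → [0,∞]` (`EReal`-valued) is increasing, convex, and strictly convex
on its domain, and the two-point cyclical monotonicity inequality
`ℓ(|x₁-x₂|) + ℓ(|x₁'-x₂'|) ≤ ℓ(|x₁-x₂'|) + ℓ(|x₁'-x₂|)` holds with finite
left-hand side, then `x₁ < x₁'` implies `x₂ ≤ x₂'`. -/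
theorem cyclical_monotonicity_real (ℓ : ℝ → EReal)
    (hnonneg : ∀ d : ℝ, 0 ≤ d → (0 : EReal) ≤ ℓ d)
    (hmono : MonotoneOn ℓ (Set.Ici (0:ℝ)))
    (hsmono : StrictMonoOn ℓ {d : ℝ | 0 ≤ d ∧ ℓ d ≠ ⊤})
    (hconv : ∀ a ∈ Set.Ici (0:ℝ), ∀ b ∈ Set.Ici (0:ℝ), ∀ t : ℝ, 0 ≤ t → t ≤ 1 →
      ℓ (t * a + (1 - t) * b) ≤ (t : EReal) * ℓ a + ((1 - t : ℝ) : EReal) * ℓ b)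
    (hsconv : ∀ a ∈ {d : ℝ | 0 ≤ d ∧ ℓ d ≠ ⊤}, ∀ b ∈ {d : ℝ | 0 ≤ d ∧ ℓ d ≠ ⊤},
      a ≠ b → ∀ t : ℝ, 0 < t → t < 1 →
      ℓ (t * a + (1 - t) * b) < (t : EReal) * ℓ a + ((1 - t : ℝ) : EReal) * ℓ b)
    (x₁ x₂ x₁' x₂' : ℝ)
    (hfin₁ : ℓ |x₁ - x₂| ≠ ⊤) (hfin₂ : ℓ |x₁' - x₂'| ≠ ⊤)
    (hcm : ℓ |x₁ - x₂| + ℓ |x₁' - x₂'| ≤ ℓ |x₁ - x₂'| + ℓ |x₁' - x₂|)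
    (hx : x₁ < x₁') : x₂ ≤ x₂' := by
  by_contra hcon
  push_neg at hcon
  set s := x₁ - x₂ with hs_def
  set t := x₁' - x₂' with ht_def
  set p := x₁ - x₂' with hp_def
  set q := x₁' - x₂ with hq_def
  have hst : s < t := by simp only [hs_def, ht_def]; linarith
  set θ : ℝ := (t - p) / (t - s) with hθ_def
  have hts : (0:ℝ) < t - s := by linarith
  have htp : (0:ℝ) < t - p := by simp only [ht_def, hp_def]; linarith
  have hps : (0:ℝ) < p - s := by simp only [hs_def, hp_def]; linarith
  have hθ0 : 0 < θ := div_pos htp hts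
  have hθ1 : θ < 1 := by
    rw [hθ_def, div_lt_one hts]; linarith
  have hpeq : θ * s + (1 - θ) * t = p := by
    field_simp [hθ_def]
    have hk : θ * (t - s) = t - p := by rw [hθ_def]; exact div_mul_cancel₀ _ hts.ne'
    linear_combination -hk
  have hqeq : (1 - θ) * s + (1 - (1 - θ)) * t = q := by
    have hpq : p + q = s + t := by
      simp only [hp_def, hq_def, hs_def, ht_def]; ring
    field_simp [hθ_def]
    nlinarith [hpq]
  have hp' : ℓ |p| < (θ : EReal) * ℓ |s| + ((1 - θ : ℝ) : EReal) * ℓ |t| := by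
    rw [← hpeq]
    exact ereal_key ℓ hnonneg hmono hsmono hsconv s t θ hst.ne hfin₁ hfin₂ hθ0 hθ1
  have hq' : ℓ |q| < ((1 - θ : ℝ) : EReal) * ℓ |s| + (θ : EReal) * ℓ |t| := by
    have := ereal_key ℓ hnonneg hmono hsmono hsconv s t (1 - θ) hst.ne hfin₁ hfin₂
      (by linarith) (by linarith)
    rw [hqeq] at this
    have h1 : (1 - (1 - θ) : ℝ) = θ := by ring
    rw [h1] at this
    exact this
  -- lift ℓ|s|, ℓ|t| to reals
  have hsbot : ℓ |s| ≠ ⊥ := by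
    intro h; have := hnonneg |s| (abs_nonneg s); rw [h] at this; simp at this
  have htbot : ℓ |t| ≠ ⊥ := by
    intro h; have := hnonneg |t| (abs_nonneg t); rw [h] at this; simp at this
  obtain ⟨A, hA⟩ : ∃ A : ℝ, ℓ |s| = (A : EReal) := ⟨_, (EReal.coe_toReal hfin₁ hsbot).symm⟩
  obtain ⟨B, hB⟩ : ∃ B : ℝ, ℓ |t| = (B : EReal) := ⟨_, (EReal.coe_toReal hfin₂ htbot).symm⟩
  rw [hA, hB] at hp' hq' hcm
  have hsum : ℓ |p| + ℓ |q| < (A : EReal) + (B : EReal) := by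
    have h1 := EReal.add_lt_add hp' hq'
    calc ℓ |p| + ℓ |q|
        < ((θ : EReal) * A + ((1 - θ : ℝ) : EReal) * B)
          + (((1 - θ : ℝ) : EReal) * A + (θ : EReal) * B) := h1
      _ = (A : EReal) + (B : EReal) := by
          rw [← EReal.coe_mul, ← EReal.coe_mul, ← EReal.coe_mul, ← EReal.coe_mul,
            ← EReal.coe_add, ← EReal.coe_add, ← EReal.coe_add, ← EReal.coe_add]
          norm_cast
          ring
  exact absurd (lt_of_le_of_lt hcm hsum) (lt_irrefl _)
end
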